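/- Let A be a mutually uncorrelated set of M words, each of length n ≥ 1, over the four-letter DNA alphabet {A,T,G,C}, and let c_ℓ = |C_A(ℓ)| be the number of words of length ℓ over {A,T,G,C} avoiding every word of A as a contiguous substring. Then c_ℓ = 4^ℓ for 0 ≤ ℓ ≤ n−1, and c_ℓ = 4·c_{ℓ−1} − M·c_{ℓ−n} for every ℓ ≥ n. -/

import Mathlib

/-!
Write `c ℓ` for the number of words of length `ℓ` avoiding `A`. For `ℓ < n` no word of `A`
fits, so `c ℓ = 4 ^ ℓ`. Otherwise, extend each avoiding word of length `ℓ` by one letter: of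
the resulting `4 * c ℓ` words, those that still avoid `A` are counted by `c (ℓ + 1)`, and in
the others an occurrence must be a suffix, so they are exactly the words `u ++ a` with
`a ∈ A` and `u` avoiding of length `ℓ + 1 - n`. Mutual uncorrelation guarantees that every
such `u ++ a` arises this way: an occurrence of some `b ∈ A` straddling the junction would
make a nonempty proper suffix of `b` equal to a prefix of `a`.
Hence `4 * c ℓ = c (ℓ + 1) + M * c (ℓ + 1 - n)`.
-/

/-- The four-letter DNA alphabet. -/
inductive DNA | A | T | G | C
deriving DecidableEq

/-- Hamming distance between two words (of equal length) given as lists. -/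
def hammingD {α : Type*} [DecidableEq α] (x y : List α) : ℕ :=
  (x.zip y).countP (fun p => decide (p.1 ≠ p.2))

/-- A binary word has `D`-bounded running digital sum if in every prefix the
numbers of ones and zeros differ by at most `D`. -/
def brds (D : ℕ) (w : List Bool) : Prop :=
  ∀ k ≤ w.length,
    (((w.take k).count true : ℤ) - ((w.take k).count false : ℤ)).natAbs ≤ D

/-- The letters `G`, `C` of the DNA alphabet. -/
def isGC : DNA → Bool
  | DNA.G => true
  | DNA.C => true
  | _ => false

/-- A DNA word is `D`-GC-prefix-balanced if in every prefix the number of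
letters from {G,C} and the number of letters from {A,T} differ by at most `D`. -/
def gcpb (D : ℕ) (w : List DNA) : Prop :=
  ∀ k ≤ w.length,
    (((w.take k).countP isGC : ℤ) - ((w.take k).countP (fun c => !(isGC c)) : ℤ)).natAbs ≤ D

/-- A word is self-uncorrelated if no proper nonempty prefix equals the suffix
of the same length. -/
def selfUncorr {α : Type*} (w : List α) : Prop :=
  ∀ k, 1 ≤ k → k ≤ w.length - 1 → w.take k ≠ w.drop (w.length - k)

/-- A set of words is mutually uncorrelated if every word is self-uncorrelated
and for every ordered pair of distinct words `x`, `y` no nonempty prefix of `y`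
equals a suffix of `x` of the same length. -/
def mutUncorr {α : Type*} (S : Set (List α)) : Prop :=
  (∀ w ∈ S, selfUncorr w) ∧
  ∀ x ∈ S, ∀ y ∈ S, x ≠ y →
    ∀ k, 1 ≤ k → k ≤ x.length → y.take k ≠ x.drop (x.length - k)

/-- A Dyck word: equal numbers of ones and zeros, and every prefix has at least
as many ones as zeros. -/
def isDyck (w : List Bool) : Prop :=
  w.count true = w.count false ∧
  ∀ k ≤ w.length, (w.take k).count false ≤ (w.take k).count true

/-- The height of a (Dyck) word is at most `D`: in every prefix the number of
ones exceeds the number of zeros by at most `D`. -/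
def heightLe (D : ℕ) (w : List Bool) : Prop :=
  ∀ k ≤ w.length, ((w.take k).count true : ℤ) - ((w.take k).count false : ℤ) ≤ (D : ℤ)

/-- `avoidCount A ℓ`: the number of DNA words of length `ℓ` containing no word
of `A` as a contiguous substring. -/
noncomputable def avoidCount (A : Finset (List DNA)) (l : ℕ) : ℕ :=
  Set.ncard {w : List DNA | w.length = l ∧ ∀ a ∈ A, ¬ a <:+: w}

instance : Fintype DNA :=
  ⟨{DNA.A, DNA.T, DNA.G, DNA.C}, by intro x; cases x <;> simp⟩

section

variable {α : Type*}

def avoiding (A : Finset (List α)) (l : ℕ) : Set (List α) :=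
  {w | w.length = l ∧ ∀ a ∈ A, ¬ a <:+: w}

theorem mutUncorr.eq_of_isSuffix_of_isPrefix {S : Set (List α)} (hS : mutUncorr S)
    {a b l : List α} (ha : a ∈ S) (hb : b ∈ S) (hl : l ≠ []) (hlb : l <:+ b)
    (hla : l <+: a) :
    l = b := by
  have hk : 1 ≤ l.length := List.length_pos_iff.mpr hl
  have hdrop := List.suffix_iff_eq_drop.mp hlb
  have htake := List.prefix_iff_eq_take.mp hla
  by_cases hab : a = b
  · subst hab
    refine hlb.eq_of_length (by_contra fun hne => hS.1 a ha l.length hk ?_ ?_)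
    · have := hlb.length_le
      omega
    · rw [← hdrop, ← htake]
  · exact (hS.2 b hb a ha (Ne.symm hab) l.length hk hlb.length_le
      (by rw [← hdrop, ← htake])).elim

theorem isSuffix_of_isInfix_of_not_isInfix_dropLast {b v : List α} (hb : b <:+: v)
    (hdrop : ¬ b <:+: v.dropLast) : b <:+ v := by
  cases v using List.reverseRecOn with
  | nil => exact (hdrop (by simpa using hb)).elim
  | append_singleton u x _ =>
    rw [List.dropLast_concat] at hdrop
    exact (List.infix_concat_iff.mp hb).resolve_right hdrop

theorem not_isInfix_dropLast_append {A : Finset (List α)} {n : ℕ}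
    (hlen : ∀ a ∈ A, a.length = n) (hmu : mutUncorr (A : Set (List α)))
    {a u : List α} (ha : a ∈ A) (hu : ∀ b ∈ A, ¬ b <:+: u) :
    ∀ b ∈ A, ¬ b <:+: (u ++ a).dropLast := by
  have hne : ∀ b ∈ A, b ≠ [] := fun b hb hnil => hu b hb (hnil ▸ List.nil_infix)
  rintro b hb hinf
  rw [List.dropLast_append_of_ne_nil (hne a ha), List.infix_append_iff_ne_nil] at hinf
  rcases hinf with hinf | hinf | ⟨l₁, l₂, hl₁, hl₂, rfl, -, hpre⟩
  · exact hu b hb hinf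
  · have hle := hinf.length_le
    have hpos := List.length_pos_iff.mpr (hne b hb)
    rw [List.length_dropLast, hlen a ha, hlen b hb] at hle
    rw [hlen b hb] at hpos
    omega
  · exact hl₁ (List.self_eq_append_left.mp (hmu.eq_of_isSuffix_of_isPrefix ha hb hl₂
      (List.suffix_append l₁ l₂) (hpre.trans (List.dropLast_prefix a))))

theorem ncard_setOf_length_eq [Fintype α] (l : ℕ) :
    {w : List α | w.length = l}.ncard = Fintype.card α ^ l := by
  rw [← Nat.card_coe_set_eq]
  exact (Nat.card_eq_fintype_card (α := List.Vector α l)).trans (card_vector l)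

theorem avoiding_eq_setOf_length_eq {A : Finset (List α)} {l : ℕ}
    (hA : ∀ a ∈ A, l < a.length) : avoiding A l = {w | w.length = l} := by
  ext w
  exact ⟨And.left, fun (hw : w.length = l) =>
    ⟨hw, fun a ha hinf => (hA a ha).not_ge (hw ▸ hinf.length_le)⟩⟩

theorem ncard_setOf_dropLast_mem [Fintype α] (s : Set (List α)) :
    {v | v ≠ [] ∧ v.dropLast ∈ s}.ncard = s.ncard * Fintype.card α := by
  have himage : {v | v ≠ [] ∧ v.dropLast ∈ s} =
      (fun p : List α × α => p.1 ++ [p.2]) '' (s ×ˢ Set.univ) := by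
    ext v
    constructor
    · rintro ⟨hv, hs⟩
      exact ⟨(v.dropLast, v.getLast hv), ⟨hs, trivial⟩, List.dropLast_concat_getLast hv⟩
    · rintro ⟨⟨w, x⟩, ⟨hw, -⟩, rfl⟩
      simpa using hw
  have hinj : Function.Injective (fun p : List α × α => p.1 ++ [p.2]) := by
    rintro ⟨w, x⟩ ⟨w', x'⟩ h
    simpa using h
  rw [himage, Set.ncard_image_of_injective _ hinj, Set.ncard_prod, Set.ncard_univ,
    Nat.card_eq_fintype_card]

theorem avoiding_finite [Finite α] (A : Finset (List α)) (l : ℕ) : (avoiding A l).Finite :=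
  (List.finite_length_eq α l).subset fun _ => And.left

theorem setOf_dropLast_mem_avoiding {A : Finset (List α)} {n l : ℕ}
    (hlen : ∀ a ∈ A, a.length = n) (hmu : mutUncorr (A : Set (List α))) (hnl : n ≤ l + 1) :
    {v | v ≠ [] ∧ v.dropLast ∈ avoiding A l} =
      avoiding A (l + 1) ∪
        (fun p : List α × List α => p.2 ++ p.1) '' (A ×ˢ avoiding A (l + 1 - n)) := by
  ext v
  constructor
  · rintro ⟨hv, hvl, hvA⟩
    have hvl' : v.length = l + 1 := by
      have := List.length_pos_iff.mpr hv
      rw [List.length_dropLast] at hvl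
      omega
    by_cases hv_avoid : ∀ a ∈ A, ¬ a <:+: v
    · exact Or.inl ⟨hvl', hv_avoid⟩
    push Not at hv_avoid
    obtain ⟨a, ha, hinf⟩ := hv_avoid
    obtain ⟨u, rfl⟩ := isSuffix_of_isInfix_of_not_isInfix_dropLast hinf (hvA a ha)
    have hane : a ≠ [] := fun h => hvA a ha (h ▸ List.nil_infix)
    rw [List.dropLast_append_of_ne_nil hane] at hvA
    refine Or.inr ⟨(a, u),
      ⟨ha, ?_, fun b hb hbu => hvA b hb (hbu.trans List.infix_append_left)⟩, rfl⟩
    show u.length = l + 1 - n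
    rw [List.length_append, hlen a ha] at hvl'
    omega
  · rintro (⟨hvl, hvA⟩ | ⟨⟨a, u⟩, ⟨ha, hul, huA⟩, rfl⟩)
    · refine ⟨List.ne_nil_of_length_eq_add_one hvl, ?_,
        fun b hb hbv => hvA b hb (hbv.trans (List.dropLast_prefix v).isInfix)⟩
      rw [List.length_dropLast, hvl]
      rfl
    · have hane : a ≠ [] := fun h => huA a ha (h ▸ List.nil_infix)
      refine ⟨List.append_ne_nil_of_right_ne_nil u hane, ?_,
        not_isInfix_dropLast_append hlen hmu ha huA⟩
      change u.length = l + 1 - n at hul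
      rw [List.length_dropLast, List.length_append, hul, hlen a ha]
      omega

theorem ncard_avoiding_succ_add [Fintype α] {A : Finset (List α)} {n l : ℕ}
    (hlen : ∀ a ∈ A, a.length = n) (hmu : mutUncorr (A : Set (List α))) (hnl : n ≤ l + 1) :
    (avoiding A (l + 1)).ncard + A.card * (avoiding A (l + 1 - n)).ncard =
      (avoiding A l).ncard * Fintype.card α := by
  set occurrences := (fun p : List α × List α => p.2 ++ p.1) '' (A ×ˢ avoiding A (l + 1 - n))
  have hdisj : Disjoint (avoiding A (l + 1)) occurrences := by
    rw [Set.disjoint_right]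
    rintro _ ⟨⟨a, u⟩, ⟨ha, -⟩, rfl⟩ ⟨-, hvA⟩
    exact hvA a ha List.infix_append_right
  have hinj :
      Set.InjOn (fun p : List α × List α => p.2 ++ p.1) (A ×ˢ avoiding A (l + 1 - n)) := by
    rintro ⟨a, u⟩ ⟨-, hu, -⟩ ⟨a', u'⟩ ⟨-, hu', -⟩ h
    obtain ⟨rfl, rfl⟩ := List.append_inj h (hu.trans hu'.symm)
    rfl
  have hfin : occurrences.Finite := (A.finite_toSet.prod (avoiding_finite A _)).image _
  rw [← ncard_setOf_dropLast_mem, setOf_dropLast_mem_avoiding hlen hmu hnl,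
    Set.ncard_union_eq hdisj (avoiding_finite A _) hfin, hinj.ncard_image, Set.ncard_prod,
    Set.ncard_coe_finset]

end

/-- for a mutually uncorrelated set `A` of `M` words of length
`n`, the counts `c_ℓ = |C_A(ℓ)|` satisfy `c_ℓ = 4^ℓ` for `ℓ ≤ n-1` and
`c_ℓ = 4 c_{ℓ-1} - M c_{ℓ-n}` for `ℓ ≥ n`. -/
theorem stmt12 (n M : ℕ) (hn : 1 ≤ n) (A : Finset (List DNA))
    (hcard : A.card = M) (hlen : ∀ w ∈ A, w.length = n)
    (hmu : mutUncorr (A : Set (List DNA))) :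
    (∀ l : ℕ, l ≤ n - 1 → avoidCount A l = 4 ^ l) ∧
    ∀ l : ℕ, n ≤ l →
      (avoidCount A l : ℤ) =
        4 * (avoidCount A (l - 1) : ℤ) - (M : ℤ) * (avoidCount A (l - n) : ℤ) := by
  have hcount (l : ℕ) : avoidCount A l = (avoiding A l).ncard := rfl
  refine ⟨fun l hl => ?_, fun l hl => ?_⟩
  · rw [hcount, avoiding_eq_setOf_length_eq fun a ha => by rw [hlen a ha]; omega,
      ncard_setOf_length_eq]
    rfl
  · obtain ⟨m, rfl⟩ : ∃ m, l = m + 1 := ⟨l - 1, by omega⟩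
    have h := ncard_avoiding_succ_add hlen hmu hl
    rw [← hcount, ← hcount, ← hcount, hcard, show Fintype.card DNA = 4 from rfl] at h
    rw [Nat.add_sub_cancel]
    zify at h
    linear_combination h
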